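/- Let λ : ℝ⁴ → ℝ be differentiable and define u : ℝ⁴ → ℝ⁴ by u(t,x,y,z) = (cosh λ, -sinh λ, 0, 0). Define the vorticity of u with respect to the Minkowski metric η = diag(-1,1,1,1) by ω_{μν} = ∂_{[ν} u_{μ]} + u̇_{[μ} u_{ν]}, where u_μ = η_{μρ} u^ρ and u̇^μ = u^ρ ∂_ρ u^μ. Then ω_{μν} = 0 everywhere if and only if ∂_y λ = 0 and ∂_z λ = 0 everywhere. -/
import Mathlib


/-- Partial derivative `∂_μ f` of a real-valued function on `ℝ⁴`. -/
noncomputable def pd (f : (Fin 4 → ℝ) → ℝ) (μ : Fin 4) (p : Fin 4 → ℝ) : ℝ :=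
  fderiv ℝ f p (Pi.single μ 1)

/-- Components of the Minkowski metric `diag(-1,1,1,1)` (diagonal entries). -/
noncomputable def etaDiag : Fin 4 → ℝ := ![-1, 1, 1, 1]

/-- Lowered components `u_μ = η_{μρ} u^ρ`. -/
noncomputable def ulow (u : (Fin 4 → ℝ) → Fin 4 → ℝ) (μ : Fin 4) (p : Fin 4 → ℝ) : ℝ :=
  etaDiag μ * u p μ

/-- Acceleration `u̇^μ = u^ρ ∂_ρ u^μ`. -/
noncomputable def udot (u : (Fin 4 → ℝ) → Fin 4 → ℝ) (μ : Fin 4) (p : Fin 4 → ℝ) : ℝ :=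
  ∑ ρ, u p ρ * pd (fun q => u q μ) ρ p

/-- Lowered acceleration `u̇_μ = η_{μρ} u̇^ρ`. -/
noncomputable def udotlow (u : (Fin 4 → ℝ) → Fin 4 → ℝ) (μ : Fin 4) (p : Fin 4 → ℝ) : ℝ :=
  etaDiag μ * udot u μ p

/-- Vorticity `ω_{μν} = ∂_{[ν} u_{μ]} + u̇_{[μ} u_{ν]}`. -/
noncomputable def vorticity (u : (Fin 4 → ℝ) → Fin 4 → ℝ) (μ ν : Fin 4) (p : Fin 4 → ℝ) : ℝ :=
  (pd (ulow u μ) ν p - pd (ulow u ν) μ p) / 2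
    + (udotlow u μ p * ulow u ν p - udotlow u ν p * ulow u μ p) / 2

lemma pd_neg (f : (Fin 4 → ℝ) → ℝ) (ν : Fin 4) (p : Fin 4 → ℝ) :
    pd (fun q => -f q) ν p = -pd f ν p := by
  simp [pd, fderiv_neg]

lemma pd_const (c : ℝ) (ν : Fin 4) (p : Fin 4 → ℝ) :
    pd (fun _ => c) ν p = 0 := by
  simp [pd]

lemma pd_cosh (l : (Fin 4 → ℝ) → ℝ) (hl : Differentiable ℝ l) (ν : Fin 4) (p : Fin 4 → ℝ) :
    pd (fun q => Real.cosh (l q)) ν p = Real.sinh (l p) * pd l ν p := by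
  have h : HasFDerivAt (fun q => Real.cosh (l q)) (Real.sinh (l p) • fderiv ℝ l p) p :=
    (Real.hasDerivAt_cosh (l p)).comp_hasFDerivAt p (hl p).hasFDerivAt
  simp [pd, h.fderiv]

lemma pd_sinh (l : (Fin 4 → ℝ) → ℝ) (hl : Differentiable ℝ l) (ν : Fin 4) (p : Fin 4 → ℝ) :
    pd (fun q => Real.sinh (l q)) ν p = Real.cosh (l p) * pd l ν p := by
  have h : HasFDerivAt (fun q => Real.sinh (l q)) (Real.cosh (l p) • fderiv ℝ l p) p :=
    (Real.hasDerivAt_sinh (l p)).comp_hasFDerivAt p (hl p).hasFDerivAt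
  simp [pd, h.fderiv]

theorem stmt_15 (l : (Fin 4 → ℝ) → ℝ) (hl : Differentiable ℝ l)
    (u : (Fin 4 → ℝ) → Fin 4 → ℝ)
    (hu : ∀ p, u p = ![Real.cosh (l p), -Real.sinh (l p), 0, 0]) :
    (∀ μ ν p, vorticity u μ ν p = 0) ↔
      (∀ p, pd l 2 p = 0 ∧ pd l 3 p = 0) := by
  -- component functions
  have hu0 : (fun q => u q 0) = fun q => Real.cosh (l q) := funext fun q => by simp [hu]
  have hu1 : (fun q => u q 1) = fun q => -Real.sinh (l q) := funext fun q => by simp [hu]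
  have hu2 : (fun q => u q 2) = fun _ => (0:ℝ) := funext fun q => by simp [hu]
  have hu3 : (fun q => u q 3) = fun _ => (0:ℝ) := funext fun q => by simp [hu]
  -- lowered components as functions
  have hl0 : ulow u 0 = fun q => -Real.cosh (l q) := funext fun q => by
    simp [ulow, etaDiag, hu]
  have hl1 : ulow u 1 = fun q => -Real.sinh (l q) := funext fun q => by
    simp [ulow, etaDiag, hu]
  have hl2 : ulow u 2 = fun _ => (0:ℝ) := funext fun q => by
    simp [ulow, etaDiag, hu]
  have hl3 : ulow u 3 = fun _ => (0:ℝ) := funext fun q => by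
    simp [ulow, etaDiag, hu]
  -- derivatives of lowered components
  have hpd0 : ∀ ν p, pd (ulow u 0) ν p = -(Real.sinh (l p) * pd l ν p) := fun ν p => by
    rw [hl0]
    rw [show (fun q => -Real.cosh (l q)) = fun q => -(fun q => Real.cosh (l q)) q from rfl,
      pd_neg, pd_cosh l hl]
  have hpd1 : ∀ ν p, pd (ulow u 1) ν p = -(Real.cosh (l p) * pd l ν p) := fun ν p => by
    rw [hl1]
    rw [show (fun q => -Real.sinh (l q)) = fun q => -(fun q => Real.sinh (l q)) q from rfl,
      pd_neg, pd_sinh l hl]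
  have hpd2 : ∀ ν p, pd (ulow u 2) ν p = 0 := fun ν p => by rw [hl2, pd_const]
  have hpd3 : ∀ ν p, pd (ulow u 3) ν p = 0 := fun ν p => by rw [hl3, pd_const]
  -- acceleration
  have hA : ∀ p, ∀ μ, udot u μ p =
      u p 0 * pd (fun q => u q μ) 0 p + u p 1 * pd (fun q => u q μ) 1 p := by
    intro p μ
    have : u p 2 = 0 := by simp [hu]
    have h3 : u p 3 = 0 := by simp [hu]
    simp [udot, Fin.sum_univ_four, this, h3]
  have hud0 : ∀ p, udot u 0 p =
      Real.cosh (l p) * (Real.sinh (l p) * pd l 0 p)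
        - Real.sinh (l p) * (Real.sinh (l p) * pd l 1 p) := by
    intro p
    rw [hA p 0, hu0, pd_cosh l hl, pd_cosh l hl]
    simp [hu]
    try ring
  have hud1 : ∀ p, udot u 1 p =
      -(Real.cosh (l p) * (Real.cosh (l p) * pd l 0 p))
        + Real.sinh (l p) * (Real.cosh (l p) * pd l 1 p) := by
    intro p
    rw [hA p 1, hu1]
    rw [show (fun q => -Real.sinh (l q)) = fun q => -(fun q => Real.sinh (l q)) q from rfl,
      pd_neg, pd_neg, pd_sinh l hl, pd_sinh l hl]
    simp [hu]
    try ring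
  have hud2 : ∀ p, udot u 2 p = 0 := fun p => by
    rw [hA p 2, hu2, pd_const, pd_const]; ring
  have hud3 : ∀ p, udot u 3 p = 0 := fun p => by
    rw [hA p 3, hu3, pd_const, pd_const]; ring
  have hudl0 : ∀ p, udotlow u 0 p = -udot u 0 p := fun p => by
    simp [udotlow, etaDiag]
  have hudl1 : ∀ p, udotlow u 1 p = udot u 1 p := fun p => by
    simp [udotlow, etaDiag]
  have hudl2 : ∀ p, udotlow u 2 p = 0 := fun p => by
    simp [udotlow, etaDiag, hud2]
  have hudl3 : ∀ p, udotlow u 3 p = 0 := fun p => by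
    simp [udotlow, etaDiag, hud3]
  have hlv0 : ∀ p, ulow u 0 p = -Real.cosh (l p) := fun p => by rw [hl0]
  have hlv1 : ∀ p, ulow u 1 p = -Real.sinh (l p) := fun p => by rw [hl1]
  have hlv2 : ∀ p, ulow u 2 p = 0 := fun p => by rw [hl2]
  have hlv3 : ∀ p, ulow u 3 p = 0 := fun p => by rw [hl3]
  have hid : ∀ p, Real.cosh (l p) ^ 2 - Real.sinh (l p) ^ 2 = 1 := fun p =>
    Real.cosh_sq_sub_sinh_sq (l p)
  constructor
  · intro h p
    have h2 := h 1 2 p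
    have h3 := h 1 3 p
    unfold vorticity at h2 h3
    rw [hpd1, hpd2, hudl1, hudl2, hlv1, hlv2] at h2
    rw [hpd1, hpd3, hudl1, hudl3, hlv1, hlv3] at h3
    have hc := Real.cosh_pos (l p)
    constructor
    · have hc2 : Real.cosh (l p) * pd l 2 p = 0 := by linarith
      exact (mul_eq_zero.mp hc2).resolve_left (ne_of_gt hc)
    · have hc3 : Real.cosh (l p) * pd l 3 p = 0 := by linarith
      exact (mul_eq_zero.mp hc3).resolve_left (ne_of_gt hc)
  · intro h μ ν p
    obtain ⟨h2, h3⟩ := h p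
    have hskew : ∀ a b, vorticity u b a p = -vorticity u a b p := fun a b => by
      unfold vorticity; ring
    have hdiag : ∀ a, vorticity u a a p = 0 := fun a => by unfold vorticity; ring
    have h01 : vorticity u 0 1 p = 0 := by
      unfold vorticity
      rw [hpd0, hpd1, hudl0, hudl1, hlv0, hlv1, hud0, hud1]
      linear_combination (-(Real.cosh (l p) * pd l 0 p - Real.sinh (l p) * pd l 1 p) / 2) * hid p
    have h02 : vorticity u 0 2 p = 0 := by
      unfold vorticity
      rw [hpd0, hpd2, hudl0, hudl2, hlv0, hlv2, h2]; ring
    have h03 : vorticity u 0 3 p = 0 := by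
      unfold vorticity
      rw [hpd0, hpd3, hudl0, hudl3, hlv0, hlv3, h3]; ring
    have h12 : vorticity u 1 2 p = 0 := by
      unfold vorticity
      rw [hpd1, hpd2, hudl1, hudl2, hlv1, hlv2, h2]; ring
    have h13 : vorticity u 1 3 p = 0 := by
      unfold vorticity
      rw [hpd1, hpd3, hudl1, hudl3, hlv1, hlv3, h3]; ring
    have h23 : vorticity u 2 3 p = 0 := by
      unfold vorticity
      rw [hpd2, hpd3, hudl2, hudl3, hlv2, hlv3]; ring
    have h10 : vorticity u 1 0 p = 0 := by rw [hskew, h01, neg_zero]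
    have h20 : vorticity u 2 0 p = 0 := by rw [hskew, h02, neg_zero]
    have h30 : vorticity u 3 0 p = 0 := by rw [hskew, h03, neg_zero]
    have h21 : vorticity u 2 1 p = 0 := by rw [hskew, h12, neg_zero]
    have h31 : vorticity u 3 1 p = 0 := by rw [hskew, h13, neg_zero]
    have h32 : vorticity u 3 2 p = 0 := by rw [hskew, h23, neg_zero]
    fin_cases μ <;> fin_cases ν <;>
      first
        | exact hdiag _
        | exact h01 | exact h02 | exact h03
        | exact h12 | exact h13 | exact h23
        | exact h10 | exact h20 | exact h30
        | exact h21 | exact h31 | exact h32
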